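/- arXiv:2401.15330 — 5 statements merged into one kernel-verified Lean document; each statement's English description precedes it below -/
import Mathlib

section
/- Hierarchical objective lower bound: let t be a tree with fixed leaves t_fix and regularized objective R(t') = L(t') + λ H_{t'}, where L is an additive nonnegative per-sample loss. Then any child tree t' obtained from t by splitting only splitting leaves (so that the fixed leaves of t remain leaves of t' and H_{t'} > H_t) satisfies R(t') ≥ L(t_fix) + λ H_t, where L(t_fix) is the sum of per-sample losses over samples captured by the fixed leaves of t. -/
/-- Hierarchical objective lower bound: for a child tree `t'` (a finite set of leaves,
each carrying a nonnegative loss) that keeps all fixed leaves of the parent `t` and has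
strictly more leaves than `t`, the regularized objective of `t'` is bounded below by the
loss of the fixed leaves of `t` plus `λ H_t`. -/
theorem hierarchical_objective_lower_bound
    {Leaf : Type*} [DecidableEq Leaf]
    (loss : Leaf → ℝ) (hloss : ∀ l, 0 ≤ loss l)
    (lam : ℝ) (hlam : 0 < lam)
    (tfix tchild : Finset Leaf)
    (Ht : ℕ)
    (hfix : tfix ⊆ tchild)
    (hH : Ht + 1 ≤ tchild.card) :
    (∑ l ∈ tfix, loss l) + lam * (Ht : ℝ)
      ≤ (∑ l ∈ tchild, loss l) + lam * (tchild.card : ℝ) := by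
  have h1 : (∑ l ∈ tfix, loss l) ≤ ∑ l ∈ tchild, loss l :=
    Finset.sum_le_sum_of_subset_of_nonneg hfix (fun l _ _ => hloss l)
  have h2 : (Ht : ℝ) ≤ (tchild.card : ℝ) := by
    exact_mod_cast Nat.le_of_succ_le hH
  nlinarith
end

section
/- Equivalent points lower bound: let t be a tree with fixed leaves t_fix, splitting leaves t_split, and H_t leaves. For any child tree t' of t, R(t') ≥ L(t_fix) + λ H_t + λ + Σ_{u ∈ U} E_u · 1{t_split captures u}, where U is a collection of pairwise disjoint equivalent point sets and E_u is the equivalent loss of u. -/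
/-- Equivalent points lower bound.  Leaves are modelled as finite sets of sample indices;
each leaf `l` of the child tree `t'` predicts a single survival function `pred l`, and its
loss is the sum of the nonnegative per-sample losses `ell (pred l) i` over the samples
`i ∈ l` it captures.  The child tree `t'` keeps the fixed leaves `tfix` of the parent `t`
and has at least `H_t + 1` leaves; every equivalent set `u` (indexed by `κ`) captured by
the splitting leaves of `t` is fully captured by some non-fixed leaf of `t'`.  Then
`R(t') ≥ L(t_fix) + λ H_t + λ + ∑_{u ∈ U} E_u · 1{t_split captures u}`,
where `E_u = ∑_{k ∈ u} ell (Sstar u) k` is the equivalent loss of `u` (minimum over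
predictors, attained at `Sstar u`). -/
theorem equivalent_points_lower_bound
    {ι κ : Type*} [DecidableEq ι] [DecidableEq (Finset ι)] {𝒮 : Type*}
    (ell : 𝒮 → ι → ℝ) (hell : ∀ S i, 0 ≤ ell S i)
    (pred : Finset ι → 𝒮)
    (lam : ℝ) (hlam : 0 < lam)
    (tfix tleaves : Finset (Finset ι)) (Ht : ℕ)
    (hfix : tfix ⊆ tleaves)
    (hH : Ht + 1 ≤ tleaves.card)
    (hleafdisj : (tleaves : Set (Finset ι)).PairwiseDisjoint id)
    (U : Finset κ) (usets : κ → Finset ι)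
    (hune : ∀ a ∈ U, (usets a).Nonempty)
    (husdisj : ∀ a ∈ U, ∀ b ∈ U, a ≠ b → Disjoint (usets a) (usets b))
    (captured : κ → Prop) [DecidablePred captured]
    (hcap : ∀ a ∈ U, captured a → ∃ l ∈ tleaves, l ∉ tfix ∧ usets a ⊆ l)
    (Sstar : κ → 𝒮)
    (hstar : ∀ a, ∀ S : 𝒮, ∑ k ∈ usets a, ell (Sstar a) k ≤ ∑ k ∈ usets a, ell S k) :
    (∑ l ∈ tfix, ∑ i ∈ l, ell (pred l) i) + lam * (Ht : ℝ) + lam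
        + ∑ a ∈ U, (if captured a then ∑ k ∈ usets a, ell (Sstar a) k else 0)
      ≤ (∑ l ∈ tleaves, ∑ i ∈ l, ell (pred l) i) + lam * (tleaves.card : ℝ) := by
  classical
  have hsplit : (∑ l ∈ tleaves, ∑ i ∈ l, ell (pred l) i)
      = (∑ l ∈ tfix, ∑ i ∈ l, ell (pred l) i)
        + ∑ l ∈ tleaves \ tfix, ∑ i ∈ l, ell (pred l) i := by
    rw [add_comm, Finset.sum_sdiff hfix]
  have hlam' : lam * (Ht : ℝ) + lam ≤ lam * (tleaves.card : ℝ) := by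
    have h1 : (Ht : ℝ) + 1 ≤ (tleaves.card : ℝ) := by exact_mod_cast hH
    nlinarith
  set A := U.filter (fun a => captured a) with hA
  have hAU : A ⊆ U := Finset.filter_subset _ _
  have hcap' : ∀ a, ∃ l, a ∈ A → l ∈ tleaves \ tfix ∧ usets a ⊆ l := by
    intro a
    by_cases h : a ∈ A
    · have hm := Finset.mem_filter.mp h
      obtain ⟨l, hl, hnf, hsub⟩ := hcap a hm.1 hm.2
      exact ⟨l, fun _ => ⟨Finset.mem_sdiff.mpr ⟨hl, hnf⟩, hsub⟩⟩
    · exact ⟨∅, fun h' => absurd h' h⟩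
  choose f hf using hcap'
  have hiff : (∑ a ∈ U, (if captured a then ∑ k ∈ usets a, ell (Sstar a) k else 0))
      = ∑ a ∈ A, ∑ k ∈ usets a, ell (Sstar a) k := by
    rw [hA, Finset.sum_filter]
  have hfiber : ∑ a ∈ A, ∑ k ∈ usets a, ell (Sstar a) k
      = ∑ l ∈ tleaves \ tfix, ∑ a ∈ A.filter (fun a => f a = l),
          ∑ k ∈ usets a, ell (Sstar a) k := by
    exact (Finset.sum_fiberwise_of_maps_to (fun a ha => (hf a ha).1) _).symm
  have hkey : ∀ l ∈ tleaves \ tfix,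
      ∑ a ∈ A.filter (fun a => f a = l), ∑ k ∈ usets a, ell (Sstar a) k
        ≤ ∑ i ∈ l, ell (pred l) i := by
    intro l hl
    have h1 : ∑ a ∈ A.filter (fun a => f a = l), ∑ k ∈ usets a, ell (Sstar a) k
        ≤ ∑ a ∈ A.filter (fun a => f a = l), ∑ k ∈ usets a, ell (pred l) k :=
      Finset.sum_le_sum (fun a _ => hstar a (pred l))
    have hdisj : ∀ a ∈ A.filter (fun a => f a = l), ∀ b ∈ A.filter (fun a => f a = l),
        a ≠ b → Disjoint (usets a) (usets b) := by
      intro a ha b hb hab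
      exact husdisj a (hAU (Finset.mem_filter.mp ha).1) b (hAU (Finset.mem_filter.mp hb).1) hab
    have h2 : ∑ a ∈ A.filter (fun a => f a = l), ∑ k ∈ usets a, ell (pred l) k
        = ∑ i ∈ (A.filter (fun a => f a = l)).biUnion usets, ell (pred l) i :=
      (Finset.sum_biUnion hdisj).symm
    have hsub : (A.filter (fun a => f a = l)).biUnion usets ⊆ l := by
      intro i hi
      obtain ⟨a, ha, hia⟩ := Finset.mem_biUnion.mp hi
      have hm := Finset.mem_filter.mp ha
      have := (hf a hm.1).2
      rw [hm.2] at this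
      exact this hia
    have h3 : ∑ i ∈ (A.filter (fun a => f a = l)).biUnion usets, ell (pred l) i
        ≤ ∑ i ∈ l, ell (pred l) i :=
      Finset.sum_le_sum_of_subset_of_nonneg hsub (fun i _ _ => hell _ i)
    linarith
  have hmain : ∑ a ∈ A, ∑ k ∈ usets a, ell (Sstar a) k
      ≤ ∑ l ∈ tleaves \ tfix, ∑ i ∈ l, ell (pred l) i := by
    rw [hfiber]; exact Finset.sum_le_sum hkey
  rw [hsplit, hiff]
  linarith
end

section
/- Upper bound on the number of leaves of an optimal tree: if t* minimizes R(t) = L(t) + λ H_t with L(t) ≥ 0 and λ > 0, and R^c is any achieved objective value (R(t') = R^c for some tree t'), then H_{t*} ≤ ⌊R^c / λ⌋. Moreover, if trees split on M binary features, H_{t*} ≤ 2^M. -/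
/-- Upper bound on the number of leaves of an optimal tree: if `t*` has nonnegative loss
`Lstar`, objective `Lstar + λ H_{t*} ≤ R^c` (the achieved current best objective), and
its leaves are distinguished by `M` binary features, then `H_{t*} ≤ ⌊R^c/λ⌋` and
`H_{t*} ≤ 2^M`. -/
theorem optimal_tree_leaf_upper_bound
    (M : ℕ)
    (leaves : Finset (Fin M → Bool))
    (Lstar lam Rc : ℝ) (hL : 0 ≤ Lstar) (hlam : 0 < lam)
    (hopt : Lstar + lam * (leaves.card : ℝ) ≤ Rc) :
    (leaves.card : ℤ) ≤ ⌊Rc / lam⌋ ∧ leaves.card ≤ 2 ^ M := by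
  constructor
  · rw [Int.le_floor]
    push_cast
    rw [le_div_iff₀ hlam, mul_comm]
    linarith
  · calc leaves.card ≤ Fintype.card (Fin M → Bool) := leaves.card_le_univ
      _ = 2 ^ M := by simp
end

section
/- Parent-specific leaf bound: let t have fixed-leaf loss L(t_fix) ≥ 0 and H_t leaves, let R^c be the current best objective, and suppose a child tree t' of t satisfies R(t') ≤ R^c. Then H_{t'} ≤ H_t + ⌊(R^c − L(t_fix) − λ H_t)/λ⌋. -/
/-- Parent-specific upper bound on the number of leaves: if a child tree `t'` of `t`
satisfies `R(t') = L(t') + λ H_{t'} ≤ R^c`, with `L(t') ≥ L(t_fix) ≥ 0` and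
`H_{t'} ≥ H_t`, then `H_{t'} ≤ H_t + ⌊(R^c − L(t_fix) − λ H_t)/λ⌋`. -/
theorem parent_specific_leaf_upper_bound
    (Lfix Lchild lam Rc : ℝ) (Ht Hchild : ℕ)
    (hLfix : 0 ≤ Lfix) (hlam : 0 < lam)
    (hmono : Lfix ≤ Lchild)
    (hHt : Ht ≤ Hchild)
    (hRc : Lchild + lam * (Hchild : ℝ) ≤ Rc) :
    (Hchild : ℤ) ≤ (Ht : ℤ) + ⌊(Rc - Lfix - lam * (Ht : ℝ)) / lam⌋ := by
  have h1 : ((Hchild : ℤ) - (Ht : ℤ)) ≤ ⌊(Rc - Lfix - lam * (Ht : ℝ)) / lam⌋ := by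
    rw [Int.le_floor]
    rw [le_div_iff₀ hlam]
    push_cast
    nlinarith
  linarith
end

section
/- Nonzero loss for conflicting equivalent points: let u = {(c₁=1, y₁), (c₂, y₂)} consist of two samples with identical features where the first is uncensored with event time y₁ and the second has observation time y₂ > y₁. Then for every survival function S : ℝ → [0,1], the summed per-sample loss ℓ(S, 1, y₁) + ℓ(S, c₂, y₂) is strictly positive; hence the equivalent loss E_u > 0. -/
open MeasureTheory intervalIntegral

/-!
On `(y₁, y₂)` the first sample's censoring term penalises `S²` while the second sample's event
term penalises `(S - 1)²`. Since `s² + (s - 1)² ≥ 1/2` for every real `s` and the inverse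
weights `1 / Ĝ` are at least `1`, these two pieces alone contribute at least `(y₂ - y₁) / 2`,
and every other term of the summed loss is nonnegative.
-/

lemma one_half_le_sq_add_sub_one_sq (s : ℝ) : 1 / 2 ≤ s ^ 2 + (s - 1) ^ 2 := by
  nlinarith [sq_nonneg (2 * s - 1)]

lemma one_half_le_sq_div_add_sub_one_sq_div (s : ℝ) {u v : ℝ} (hu : u ∈ Set.Ioc (0 : ℝ) 1)
    (hv : v ∈ Set.Ioc (0 : ℝ) 1) : 1 / 2 ≤ s ^ 2 / u + (s - 1) ^ 2 / v :=
  calc 1 / 2 ≤ s ^ 2 + (s - 1) ^ 2 := one_half_le_sq_add_sub_one_sq s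
    _ ≤ s ^ 2 / u + (s - 1) ^ 2 / v :=
      add_le_add (le_div_self (sq_nonneg _) hu.1 hu.2) (le_div_self (sq_nonneg _) hv.1 hv.2)

lemma sub_div_two_le_integral_sq_div_add_integral_sub_one_sq_div {a b : ℝ} (hab : a ≤ b)
    {S U V : ℝ → ℝ} (hU : ∀ r ∈ Set.Icc a b, U r ∈ Set.Ioc (0 : ℝ) 1)
    (hV : ∀ r ∈ Set.Icc a b, V r ∈ Set.Ioc (0 : ℝ) 1)
    (hSU : IntervalIntegrable (fun r => S r ^ 2 / U r) volume a b)
    (hSV : IntervalIntegrable (fun r => (S r - 1) ^ 2 / V r) volume a b) :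
    (b - a) / 2 ≤ (∫ r in a..b, S r ^ 2 / U r) + ∫ r in a..b, (S r - 1) ^ 2 / V r := by
  rw [← integral_add hSU hSV]
  calc (b - a) / 2 = ∫ _ in a..b, (1 / 2 : ℝ) := by rw [intervalIntegral.integral_const, smul_eq_mul]; ring
    _ ≤ _ := integral_mono_on hab intervalIntegrable_const (hSU.add hSV) fun r hr =>
        one_half_le_sq_div_add_sub_one_sq_div (S r) (hU r hr) (hV r hr)

theorem conflicting_equivalent_points_positive_loss_general
    (N : ℕ) (hN : 1 ≤ N)
    (ymax y1 y2 : ℝ) (hy1 : 0 < y1) (hy12 : y1 < y2) (hy2 : y2 ≤ ymax)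
    (G : ℝ → ℝ) (hG : ∀ y, G y ∈ Set.Ioc (0:ℝ) 1)
    (c2 : ℝ) (hc2 : c2 = 0 ∨ c2 = 1)
    (S : ℝ → ℝ)
    (hint2 : IntervalIntegrable (fun r => (S r)^2 / G y1) volume y1 ymax)
    (hint3 : IntervalIntegrable (fun r => (S r - 1)^2 / G r) volume 0 y2) :
    0 < (1 / (ymax * (N:ℝ))) *
          ((∫ r in (0:ℝ)..y1, (S r - 1)^2 / G r)
            + 1 * ∫ r in y1..ymax, (S r)^2 / G y1)
        + (1 / (ymax * (N:ℝ))) *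
          ((∫ r in (0:ℝ)..y2, (S r - 1)^2 / G r)
            + c2 * ∫ r in y2..ymax, (S r)^2 / G y2) := by
  have hfirst_nonneg : ∀ r, 0 ≤ (S r - 1) ^ 2 / G r := fun r =>
    div_nonneg (sq_nonneg _) (hG r).1.le
  have hsecond_nonneg : ∀ y r, 0 ≤ S r ^ 2 / G y := fun y r =>
    div_nonneg (sq_nonneg _) (hG y).1.le
  have hmiddle := sub_div_two_le_integral_sq_div_add_integral_sub_one_sq_div hy12.le
    (fun _ _ => hG y1) (fun r _ => hG r)
    (hint2.mono_set (Set.uIcc_subset_uIcc_left (Set.mem_uIcc_of_le hy12.le hy2) ..))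
    (hint3.mono_set (Set.uIcc_subset_uIcc_right (Set.mem_uIcc_of_le hy1.le hy12.le) ..))
  have hcensored : ∫ r in y1..y2, S r ^ 2 / G y1 ≤ ∫ r in y1..ymax, S r ^ 2 / G y1 :=
    integral_mono_interval le_rfl hy12.le hy2 (.of_forall (hsecond_nonneg y1)) hint2
  have hevent : ∫ r in y1..y2, (S r - 1) ^ 2 / G r ≤ ∫ r in (0:ℝ)..y2, (S r - 1) ^ 2 / G r :=
    integral_mono_interval hy1.le hy12.le le_rfl (.of_forall hfirst_nonneg) hint3
  have hhead : 0 ≤ ∫ r in (0:ℝ)..y1, (S r - 1) ^ 2 / G r :=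
    integral_nonneg hy1.le fun r _ => hfirst_nonneg r
  have htail : 0 ≤ c2 * ∫ r in y2..ymax, S r ^ 2 / G y2 :=
    mul_nonneg (by rcases hc2 with rfl | rfl <;> norm_num)
      (integral_nonneg hy2 fun r _ => hsecond_nonneg y2 r)
  have hscale : 0 < 1 / (ymax * (N : ℝ)) :=
    one_div_pos.mpr (mul_pos (by linarith) (by exact_mod_cast hN))
  rw [← mul_add]
  exact mul_pos hscale (by linarith)

/-- Nonzero loss for conflicting equivalent points: for two samples with identical
features, the first uncensored (`c₁ = 1`) with event time `y₁` and the second with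
observation time `y₂ > y₁`, every survival function `S : ℝ → [0,1]` has strictly
positive summed per-sample IBS loss; hence the equivalent loss `E_u > 0`. -/
theorem conflicting_equivalent_points_positive_loss
    (N : ℕ) (hN : 1 ≤ N)
    (ymax y1 y2 : ℝ) (hy1 : 0 < y1) (hy12 : y1 < y2) (hy2 : y2 ≤ ymax)
    (G : ℝ → ℝ) (hGmeas : Measurable G) (hG : ∀ y, G y ∈ Set.Ioc (0:ℝ) 1)
    (c2 : ℝ) (hc2 : c2 = 0 ∨ c2 = 1)
    (S : ℝ → ℝ) (hSmeas : Measurable S) (hS : ∀ y, S y ∈ Set.Icc (0:ℝ) 1)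
    (hint1 : IntervalIntegrable (fun r => (S r - 1)^2 / G r) volume 0 y1)
    (hint2 : IntervalIntegrable (fun r => (S r)^2 / G y1) volume y1 ymax)
    (hint3 : IntervalIntegrable (fun r => (S r - 1)^2 / G r) volume 0 y2)
    (hint4 : IntervalIntegrable (fun r => (S r)^2 / G y2) volume y2 ymax) :
    0 < (1 / (ymax * (N:ℝ))) *
          ((∫ r in (0:ℝ)..y1, (S r - 1)^2 / G r)
            + 1 * ∫ r in y1..ymax, (S r)^2 / G y1)
        + (1 / (ymax * (N:ℝ))) *
          ((∫ r in (0:ℝ)..y2, (S r - 1)^2 / G r)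
            + c2 * ∫ r in y2..ymax, (S r)^2 / G y2) :=
  conflicting_equivalent_points_positive_loss_general N hN ymax y1 y2 hy1 hy12 hy2 G hG c2 hc2 S
    hint2 hint3
end
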